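/- (Findings, combined gradient of the second-order Taylor model) Let D ≥ 1, n ≥ 2, c ∈ ℝ, g ∈ ℝ^D, ỹ ∈ ℝ^D, and let H ∈ ℝ^{D×D} be symmetric. Let X ∈ ℝ^{D×n} have all rows non-constant, with row-wise standardization Y(X) having rows y_j = y(x_j) ∈ ℝⁿ and columns y^{(i)} ∈ ℝ^D. Define the second-order Taylor model of the batch loss T(X) = n·c + Σ_{i=1}^n (y^{(i)}−ỹ)ᵀ g + (1/2)Σ_{i=1}^n (y^{(i)}−ỹ)ᵀ H (y^{(i)}−ỹ). Then for every d ∈ {1,…,D}, the gradient of T with respect to the row x_d equals (1/σ(x_d)) · Σ_{j≠d} H_{d,j} ( y_j − (⟨y_j, y_d⟩/‖y_d‖²)·y_d ). In particular the gradient g, the diagonal of H, and the linearly-correlated components of the off-diagonal interactions contribute nothing to the gradient with respect to X. -/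

import Mathlib

open scoped BigOperators

/-- Mini-batch mean of a feature dimension across `n` samples. -/
noncomputable def bmean {n : ℕ} (x : Fin n → ℝ) : ℝ := (∑ i, x i) / n

/-- Mini-batch standard deviation of a feature dimension across `n` samples. -/
noncomputable def bstd {n : ℕ} (x : Fin n → ℝ) : ℝ :=
  Real.sqrt ((∑ i, (x i - bmean x) ^ 2) / n)

/-- `x` is non-constant: it differs from the constant vector of its mean. -/
def NonConstant {n : ℕ} (x : Fin n → ℝ) : Prop := x ≠ fun _ => bmean x

/-- The batch-normalization standardization phase (with ε = 0). -/
noncomputable def standardize {n : ℕ} (x : Fin n → ℝ) : Fin n → ℝ :=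
  fun i => (x i - bmean x) / bstd x

/-!
At a non-constant `x` with `σ = bstd x` and `y = standardize x`, the Jacobian of the
standardization is the symmetric matrix `J = σ⁻¹ (I - 𝟙𝟙ᵀ/n - y yᵀ/n)`; since `𝟙 ⬝ᵥ y = 0` and
`y ⬝ᵥ y = n`, it is `σ⁻¹` times the orthogonal projection onto the complement of `span {𝟙, y}`.
By the chain rule, the gradient of `T` in the row `x_d` is `J` applied to the gradient of the
quadratic model in the row `y_d`, which (for symmetric `H`) is `g_d 𝟙 + ∑ₖ H_{dk} (y_k - ỹ_k 𝟙)`.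
The projection annihilates the constant part, which carries `g` and `ỹ`, as well as the diagonal
term `H_{dd} y_d`, and sends every other row `y_k`, itself orthogonal to `𝟙`, to
`σ⁻¹ (y_k - (⟨y_k, y_d⟩ / ‖y_d‖²) y_d)`.
-/

open Matrix

noncomputable def dotProductCLM {ι : Type*} [Fintype ι] (a : ι → ℝ) : (ι → ℝ) →L[ℝ] ℝ :=
  LinearMap.toContinuousLinearMap (dotProductBilin ℝ ℝ a)

@[simp]
lemma dotProductCLM_apply {ι : Type*} [Fintype ι] (a w : ι → ℝ) : dotProductCLM a w = a ⬝ᵥ w :=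
  rfl

section Standardize

variable {n : ℕ}

lemma sum_sub_bmean (x : Fin n → ℝ) : ∑ i, (x i - bmean x) = 0 := by
  rcases Nat.eq_zero_or_pos n with rfl | hn
  · simp
  · have hn' : (n : ℝ) ≠ 0 := by positivity
    simp [Finset.sum_sub_distrib, bmean, mul_div_cancel₀ _ hn']

lemma sum_sub_bmean_mul (x w : Fin n → ℝ) (c : ℝ) :
    ∑ j, (x j - bmean x) * (w j - c) = ∑ j, (x j - bmean x) * w j := by
  simp only [mul_sub]
  rw [Finset.sum_sub_distrib, ← Finset.sum_mul, sum_sub_bmean, zero_mul, sub_zero]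

lemma sum_standardize (x : Fin n → ℝ) : ∑ i, standardize x i = 0 := by
  simp only [standardize, ← Finset.sum_div, sum_sub_bmean, zero_div]

namespace NonConstant

variable {x : Fin n → ℝ}

lemma pos (hx : NonConstant x) : 0 < n := by
  obtain ⟨i, -⟩ := Function.ne_iff.1 hx
  exact i.pos

lemma sum_sq_sub_bmean_pos (hx : NonConstant x) : 0 < ∑ i, (x i - bmean x) ^ 2 := by
  obtain ⟨i, hi⟩ := Function.ne_iff.1 hx
  exact Finset.sum_pos' (fun j _ => sq_nonneg _)
    ⟨i, Finset.mem_univ i, by have := sub_ne_zero.2 hi; positivity⟩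

lemma sum_sq_sub_bmean_div_pos (hx : NonConstant x) : 0 < (∑ i, (x i - bmean x) ^ 2) / n := by
  have := hx.pos
  have := hx.sum_sq_sub_bmean_pos
  positivity

lemma bstd_pos (hx : NonConstant x) : 0 < bstd x :=
  Real.sqrt_pos.2 hx.sum_sq_sub_bmean_div_pos

lemma sum_standardize_sq (hx : NonConstant x) : ∑ i, standardize x i ^ 2 = n := by
  have hσ : bstd x ^ 2 = (∑ i, (x i - bmean x) ^ 2) / n :=
    Real.sq_sqrt hx.sum_sq_sub_bmean_div_pos.le
  have hn : (n : ℝ) ≠ 0 := Nat.cast_ne_zero.2 hx.pos.ne'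
  simp only [standardize, div_pow, ← Finset.sum_div, hσ]
  field_simp [hx.sum_sq_sub_bmean_pos.ne']

end NonConstant

lemma hasFDerivAt_bmean (x : Fin n → ℝ) :
    HasFDerivAt bmean (dotProductCLM ((n : ℝ)⁻¹ • 1)) x := by
  have : bmean = ⇑(dotProductCLM ((n : ℝ)⁻¹ • 1 : Fin n → ℝ)) := by
    ext v
    simp [bmean, dotProduct, ← Finset.mul_sum, div_eq_inv_mul]
  exact this ▸ ContinuousLinearMap.hasFDerivAt _

lemma hasFDerivAt_sub_bmean (x : Fin n → ℝ) (j : Fin n) :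
    HasFDerivAt (fun v => v j - bmean v)
      (ContinuousLinearMap.proj j - dotProductCLM ((n : ℝ)⁻¹ • 1)) x :=
  (ContinuousLinearMap.proj j).hasFDerivAt.sub (hasFDerivAt_bmean x)

lemma hasFDerivAt_bstd {x : Fin n → ℝ} (hx : NonConstant x) :
    HasFDerivAt bstd (dotProductCLM ((n : ℝ)⁻¹ • standardize x)) x := by
  have hbstd : bstd = fun v : Fin n → ℝ => √((∑ j, (v j - bmean v) ^ 2) * (n : ℝ)⁻¹) := by
    funext v
    rw [bstd, div_eq_mul_inv]
  rw [hbstd]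
  have hvar : (∑ j, (x j - bmean x) ^ 2) * (n : ℝ)⁻¹ ≠ 0 := by
    simpa [div_eq_mul_inv] using hx.sum_sq_sub_bmean_div_pos.ne'
  refine (((HasFDerivAt.fun_sum fun j _ => (hasFDerivAt_sub_bmean x j).pow 2).mul_const
    (n : ℝ)⁻¹).sqrt hvar).congr_fderiv ?_
  ext w
  have hσ : √((∑ j, (x j - bmean x) ^ 2) * (n : ℝ)⁻¹) = bstd x := by rw [bstd, div_eq_mul_inv]
  have hy : standardize x ⬝ᵥ w = (∑ j, (x j - bmean x) * w j) / bstd x := by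
    simp only [dotProduct, standardize, Finset.sum_div, div_mul_eq_mul_div]
  simp only [_root_.smul_apply, FunLike.coe_sum, Finset.sum_apply, FunLike.coe_sub, Pi.sub_apply,
    ContinuousLinearMap.proj_apply, dotProductCLM_apply, smul_eq_mul, hσ, nsmul_eq_mul,
    Nat.cast_ofNat, Nat.add_one_sub_one, pow_one, mul_assoc, ← Finset.mul_sum, sum_sub_bmean_mul,
    smul_dotProduct, hy]
  field_simp

noncomputable def standardizeJacobian (x : Fin n → ℝ) : Matrix (Fin n) (Fin n) ℝ :=
  (bstd x)⁻¹ •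
    (1 - (n : ℝ)⁻¹ • vecMulVec 1 1 - (n : ℝ)⁻¹ • vecMulVec (standardize x) (standardize x))

lemma standardizeJacobian_isSymm (x : Fin n → ℝ) : (standardizeJacobian x).IsSymm := by
  simp only [standardizeJacobian, Matrix.IsSymm, transpose_smul, transpose_sub, transpose_one,
    transpose_vecMulVec]

lemma standardizeJacobian_mulVec (x z : Fin n → ℝ) :
    standardizeJacobian x *ᵥ z = (bstd x)⁻¹ •
      (z - ((n : ℝ)⁻¹ * ∑ i, z i) • 1 - ((n : ℝ)⁻¹ * (standardize x ⬝ᵥ z)) • standardize x) := by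
  simp only [standardizeJacobian, smul_mulVec, sub_mulVec, one_mulVec, vecMulVec_mulVec,
    one_dotProduct, op_smul_eq_smul, smul_smul]

lemma standardizeJacobian_mulVec_const (x : Fin n → ℝ) (a : ℝ) :
    standardizeJacobian x *ᵥ (fun _ => a) = 0 := by
  ext i
  have hn : (n : ℝ) ≠ 0 := Nat.cast_ne_zero.2 i.pos.ne'
  simp [standardizeJacobian_mulVec, dotProduct, ← Finset.sum_mul, sum_standardize, hn]

lemma standardizeJacobian_mulVec_standardize {x : Fin n → ℝ} (hx : NonConstant x) :
    standardizeJacobian x *ᵥ standardize x = 0 := by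
  have hyy : standardize x ⬝ᵥ standardize x = n := by
    simpa [dotProduct, sq] using hx.sum_standardize_sq
  ext i
  have hn : (n : ℝ) ≠ 0 := Nat.cast_ne_zero.2 i.pos.ne'
  simp [standardizeJacobian_mulVec, sum_standardize, hyy, hn]

lemma standardizeJacobian_mulVec_of_sum_eq_zero {x z : Fin n → ℝ} (hx : NonConstant x)
    (hz : ∑ i, z i = 0) :
    standardizeJacobian x *ᵥ z = (bstd x)⁻¹ •
      (z - (z ⬝ᵥ standardize x / ∑ i, standardize x i ^ 2) • standardize x) := by
  rw [standardizeJacobian_mulVec, hz, hx.sum_standardize_sq, dotProduct_comm, mul_zero, zero_smul,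
    sub_zero, inv_mul_eq_div]

lemma hasFDerivAt_standardize_apply {x : Fin n → ℝ} (hx : NonConstant x) (i : Fin n) :
    HasFDerivAt (fun v => standardize v i) (dotProductCLM (standardizeJacobian x i)) x := by
  have hσ := hx.bstd_pos.ne'
  have hinv := (hasDerivAt_inv hσ).comp_hasFDerivAt x (hasFDerivAt_bstd hx)
  refine ((hasFDerivAt_sub_bmean x i).mul hinv).congr_fderiv ?_
  ext w
  have hJ : standardizeJacobian x i ⬝ᵥ w = (standardizeJacobian x *ᵥ w) i := rfl
  have hxi : x i - bmean x = bstd x * standardize x i := by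
    rw [standardize, mul_div_cancel₀ _ hσ]
  simp only [hJ, standardizeJacobian_mulVec, hxi, neg_smul, smul_neg, Function.comp_apply,
    _root_.add_apply, _root_.neg_apply, _root_.smul_apply, dotProductCLM_apply, smul_dotProduct,
    smul_eq_mul, _root_.sub_apply, ContinuousLinearMap.proj_apply, one_dotProduct, Pi.smul_apply,
    Pi.sub_apply, Pi.one_apply, mul_one]
  field_simp
  ring

lemma hasFDerivAt_standardize {x : Fin n → ℝ} (hx : NonConstant x) :
    HasFDerivAt standardize (standardizeJacobian x).mulVecLin.toContinuousLinearMap x :=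
  hasFDerivAt_pi'' fun i => (hasFDerivAt_standardize_apply hx i).congr_fderiv (by ext w; rfl)

end Standardize

section TaylorModel

variable {ι : Type*} [Fintype ι] {n : ℕ} (c : ℝ) (g ytil : ι → ℝ) (H : Matrix ι ι ℝ)

/-- The model `T` of the batch loss is `Z ↦ batchTaylor c g ytil H (standardize ∘ Z)`. -/
noncomputable def batchTaylor (Y : ι → Fin n → ℝ) : ℝ :=
  (n : ℝ) * c + (∑ i, ∑ e, (Y e i - ytil e) * g e)
    + (1 / 2 : ℝ) * ∑ i, ∑ j, ∑ k, (Y j i - ytil j) * H j k * (Y k i - ytil k)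

def batchTaylorGrad (Y : ι → Fin n → ℝ) : ι → Fin n → ℝ :=
  fun e i => g e + ∑ k, H e k * (Y k i - ytil k)

lemma batchTaylorGrad_eq (Y : ι → Fin n → ℝ) (d : ι) :
    batchTaylorGrad g ytil H Y d = (fun _ => g d - ∑ k, H d k * ytil k) + ∑ k, H d k • Y k := by
  ext i
  simp only [batchTaylorGrad, mul_sub, Finset.sum_sub_distrib, Pi.add_apply, Finset.sum_apply,
    Pi.smul_apply, smul_eq_mul]
  ring

variable {H}

lemma hasFDerivAt_batchTaylor (hH : H.IsSymm) (Y : ι → Fin n → ℝ) :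
    HasFDerivAt (batchTaylor c g ytil H)
      (∑ e, (dotProductCLM (batchTaylorGrad g ytil H Y e)).comp (ContinuousLinearMap.proj e))
      Y := by
  have hcoord : ∀ e i, HasFDerivAt (fun Y : ι → Fin n → ℝ => Y e i - ytil e)
      ((ContinuousLinearMap.proj i : (Fin n → ℝ) →L[ℝ] ℝ).comp
        (ContinuousLinearMap.proj e : (ι → Fin n → ℝ) →L[ℝ] Fin n → ℝ)) Y := fun e i => by
    exact ((hasFDerivAt_apply (𝕜 := ℝ) i (Y e)).comp Y
      (hasFDerivAt_apply (𝕜 := ℝ) e Y)).sub_const (ytil e)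
  have hlin := HasFDerivAt.fun_sum (u := Finset.univ) fun i _ =>
    HasFDerivAt.fun_sum (u := Finset.univ) fun e _ => (hcoord e i).mul_const (g e)
  have hquad := (HasFDerivAt.fun_sum (u := Finset.univ) fun i _ =>
    HasFDerivAt.fun_sum (u := Finset.univ) fun j _ => HasFDerivAt.fun_sum (u := Finset.univ)
      fun k _ => ((hcoord j i).mul_const (H j k)).mul (hcoord k i)).const_mul (1 / 2 : ℝ)
  refine (((hasFDerivAt_const _ _).add hlin).add hquad).congr_fderiv ?_
  ext U
  simp only [zero_add, one_div, _root_.add_apply, _root_.sum_apply, _root_.smul_apply,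
    ContinuousLinearMap.comp_apply, ContinuousLinearMap.proj_apply, smul_eq_mul,
    dotProductCLM_apply]
  rw [show ∑ e, batchTaylorGrad g ytil H Y e ⬝ᵥ U e
      = ∑ i, ∑ e, batchTaylorGrad g ytil H Y e i * U e i from Finset.sum_comm,
    Finset.mul_sum, ← Finset.sum_add_distrib]
  refine Finset.sum_congr rfl fun i _ => ?_
  have hA : ∑ j, ∑ k, (Y j i - ytil j) * H j k * U k i
      = ∑ j, ∑ k, H j k * (Y k i - ytil k) * U j i := by
    rw [Finset.sum_comm]
    refine Finset.sum_congr rfl fun j _ => Finset.sum_congr rfl fun k _ => ?_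
    rw [hH.apply j k]
    ring
  have hB : ∑ j, ∑ k, (Y k i - ytil k) * (H j k * U j i)
      = ∑ j, ∑ k, H j k * (Y k i - ytil k) * U j i :=
    Finset.sum_congr rfl fun j _ => Finset.sum_congr rfl fun k _ => by ring
  simp only [batchTaylorGrad, Finset.sum_add_distrib, hA, hB, add_mul, Finset.sum_mul]
  ring

variable [DecidableEq ι]

lemma hasFDerivAt_batchTaylor_update (hH : H.IsSymm) (Y : ι → Fin n → ℝ) (d : ι) :
    HasFDerivAt (fun u => batchTaylor c g ytil H (Function.update Y d u))
      (dotProductCLM (batchTaylorGrad g ytil H Y d)) (Y d) := by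
  have hT := hasFDerivAt_batchTaylor c g ytil hH Y
  rw [← Function.update_eq_self d Y] at hT
  refine (hT.comp (Y d) (hasFDerivAt_update Y (Y d))).congr_fderiv ?_
  ext w
  simp [Pi.single_apply, apply_ite (fun f : (Fin n → ℝ) →L[ℝ] Fin n → ℝ => f w),
    apply_ite (dotProduct (batchTaylorGrad g ytil H Y _))]

lemma standardizeJacobian_mulVec_batchTaylorGrad {x : Fin n → ℝ} (hx : NonConstant x)
    {Y : ι → Fin n → ℝ} (hY : ∀ e, ∑ i, Y e i = 0) {d : ι} (hd : Y d = standardize x) :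
    standardizeJacobian x *ᵥ batchTaylorGrad g ytil H Y d = (bstd x)⁻¹ •
      ∑ j ∈ Finset.univ.filter (fun j => j ≠ d),
        H d j • (Y j - (Y j ⬝ᵥ Y d / ∑ i, Y d i ^ 2) • Y d) := by
  have hdiag : ∀ j ∈ Finset.univ, H d j • (standardizeJacobian x *ᵥ Y j) ≠ 0 → j ≠ d := by
    rintro j - hj rfl
    rw [hd, standardizeJacobian_mulVec_standardize hx, smul_zero] at hj
    exact hj rfl
  simp only [batchTaylorGrad_eq, mulVec_add, standardizeJacobian_mulVec_const, zero_add,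
    mulVec_sum, mulVec_smul]
  rw [← Finset.sum_filter_of_ne hdiag, Finset.smul_sum]
  refine Finset.sum_congr rfl fun j _ => ?_
  rw [standardizeJacobian_mulVec_of_sum_eq_zero hx (hY j), hd, smul_comm]

end TaylorModel

theorem findings_combined_gradient_general (D n : ℕ)
    (c : ℝ) (g ytil : Fin D → ℝ) (H : Matrix (Fin D) (Fin D) ℝ) (hH : H.IsSymm)
    (X : Fin D → Fin n → ℝ) (hX : ∀ e, NonConstant (X e)) (d : Fin D) :
    let T : (Fin D → Fin n → ℝ) → ℝ := fun Z =>
      (n : ℝ) * c + (∑ i, ∑ e, (standardize (Z e) i - ytil e) * g e)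
        + (1 / 2 : ℝ) * ∑ i, ∑ j, ∑ k,
            (standardize (Z j) i - ytil j) * H j k * (standardize (Z k) i - ytil k)
    let Yrow : Fin D → Fin n → ℝ := fun j => standardize (X j)
    ∃ L : (Fin n → ℝ) →L[ℝ] ℝ,
      HasFDerivAt (fun v : Fin n → ℝ => T (Function.update X d v)) L (X d) ∧
      ∀ w : Fin n → ℝ,
        L w = ∑ i,
          ((1 / bstd (X d)) * ∑ j ∈ Finset.univ.filter (fun j => j ≠ d),
            H d j * (Yrow j i
              - ((∑ i', Yrow j i' * Yrow d i') / (∑ i', Yrow d i' ^ 2)) * Yrow d i)) * w i := by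
  intro T Yrow
  have hT : (fun v => T (Function.update X d v))
      = (fun u => batchTaylor c g ytil H (Function.update Yrow d u)) ∘ standardize := by
    funext v
    exact congrArg (batchTaylor c g ytil H) (Function.comp_update standardize X d v)
  refine ⟨_, hT ▸ (hasFDerivAt_batchTaylor_update c g ytil hH Yrow d).comp (X d)
    (hasFDerivAt_standardize (hX d)), fun w => ?_⟩
  calc batchTaylorGrad g ytil H Yrow d ⬝ᵥ (standardizeJacobian (X d) *ᵥ w)
      = (standardizeJacobian (X d) *ᵥ batchTaylorGrad g ytil H Yrow d) ⬝ᵥ w := by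
        rw [dotProduct_mulVec, ← mulVec_transpose, (standardizeJacobian_isSymm _).eq]
    _ = _ := by
        rw [standardizeJacobian_mulVec_batchTaylorGrad g ytil (hX d)
          (fun e => sum_standardize (X e)) rfl]
        simp only [dotProduct, Pi.smul_apply, Finset.sum_apply, Pi.sub_apply, smul_eq_mul, one_div,
          Yrow]

/-- Findings: for the second-order Taylor model of the batch loss
`T(X) = nc + Σᵢ (y⁽ⁱ⁾−ỹ)ᵀg + (1/2)Σᵢ (y⁽ⁱ⁾−ỹ)ᵀH(y⁽ⁱ⁾−ỹ)` with `H` symmetric, the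
gradient of `T` with respect to the row `x_d` equals
`(1/σ(x_d)) Σ_{j≠d} H_{d,j} (y_j − (⟨y_j,y_d⟩/‖y_d‖²) y_d)`; the gradient `g`, the
diagonal of `H`, and the linearly-correlated off-diagonal components contribute
nothing. -/
theorem findings_combined_gradient (D n : ℕ) (hD : 1 ≤ D) (hn : 2 ≤ n)
    (c : ℝ) (g ytil : Fin D → ℝ) (H : Matrix (Fin D) (Fin D) ℝ) (hH : H.IsSymm)
    (X : Fin D → Fin n → ℝ) (hX : ∀ e, NonConstant (X e)) (d : Fin D) :
    let T : (Fin D → Fin n → ℝ) → ℝ := fun Z =>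
      (n : ℝ) * c + (∑ i, ∑ e, (standardize (Z e) i - ytil e) * g e)
        + (1 / 2 : ℝ) * ∑ i, ∑ j, ∑ k,
            (standardize (Z j) i - ytil j) * H j k * (standardize (Z k) i - ytil k)
    let Yrow : Fin D → Fin n → ℝ := fun j => standardize (X j)
    ∃ L : (Fin n → ℝ) →L[ℝ] ℝ,
      HasFDerivAt (fun v : Fin n → ℝ => T (Function.update X d v)) L (X d) ∧
      ∀ w : Fin n → ℝ,
        L w = ∑ i,
          ((1 / bstd (X d)) * ∑ j ∈ Finset.univ.filter (fun j => j ≠ d),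
            H d j * (Yrow j i
              - ((∑ i', Yrow j i' * Yrow d i') / (∑ i', Yrow d i' ^ 2)) * Yrow d i)) * w i :=
  findings_combined_gradient_general D n c g ytil H hH X hX d
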